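/- Let A be a linear endomorphism of a finite-dimensional vector space V over a field F whose minimal polynomial is p^r with p irreducible and separable. If there exists a subspace of V that is characteristic for A but not hyperinvariant for A, then p has degree 1 and F has exactly two elements (F = GF(2)). -/

import Mathlib

/-- A subspace `Y` is hyperinvariant for `A` if `g Y ⊆ Y` for every endomorphism `g`
commuting with `A`. -/
def HyperinvariantSubspace {F V : Type*} [Field F] [AddCommGroup V] [Module F V]
    (A : Module.End F V) (Y : Submodule F V) : Prop :=
  ∀ g : Module.End F V, Commute g A → ∀ x ∈ Y, g x ∈ Y

/-- A subspace `Y` is characteristic for `A` if it is `A`-invariant and `g Y ⊆ Y` for every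
invertible endomorphism `g` commuting with `A`. -/
def CharacteristicSubspace {F V : Type*} [Field F] [AddCommGroup V] [Module F V]
    (A : Module.End F V) (Y : Submodule F V) : Prop :=
  (∀ x ∈ Y, A x ∈ Y) ∧
    ∀ g : Module.End F V, IsUnit g → Commute g A → ∀ x ∈ Y, g x ∈ Y

/-!
Let `g` commute with `A`. The algebra `D = F[A, g]` is commutative and artinian, and each of its
residue fields contains a root of `p`; unless `p` is linear over `𝔽₂`, every such residue field
therefore has an element other than `0` and `1`. Choosing, by the Chinese remainder theorem, a
unit `u` of `D` that avoids both `0` and `g` modulo every maximal ideal makes `g - u` a unit as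
well, so `g` is a sum of two invertible endomorphisms commuting with `A`, and every characteristic
subspace is `g`-invariant.
-/

open Polynomial

theorem exists_ne_zero_ne_one_of_aeval_eq_zero {F K : Type*} [Field F] [Ring K] [Nontrivial K]
    [Algebra F K] {p : F[X]} (hirr : Irreducible p) (hp : ¬ (p.natDegree = 1 ∧ Nat.card F = 2))
    {x : K} (hx : aeval x p = 0) : ∃ s : K, s ≠ 0 ∧ s ≠ 1 := by
  by_contra! hK
  have hinj := (algebraMap F K).injective
  have hF : ∀ c : F, c = 0 ∨ c = 1 := fun c =>
    (eq_or_ne c 0).imp_right fun hc => hinj <| by rw [map_one]; exact hK _ (by simpa using hc)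
  obtain ⟨c, rfl⟩ : ∃ c : F, algebraMap F K c = x := by
    rcases eq_or_ne x 0 with rfl | hx0
    · exact ⟨0, map_zero _⟩
    · exact ⟨1, by rw [map_one, hK x hx0]⟩
  have hroot : p.IsRoot c :=
    hinj <| by rwa [map_zero, ← aeval_algebraMap_apply_eq_algebraMap_eval]
  refine hp ⟨natDegree_eq_of_degree_eq_some (degree_eq_one_of_irreducible_of_root hirr hroot),
    Nat.card_eq_two_iff.mpr ⟨0, 1, zero_ne_one, Set.eq_univ_of_forall fun c => ?_⟩⟩
  simpa using hF c

theorem isUnit_of_forall_quotient_ne_zero {D : Type*} [CommRing D] {w : D}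
    (hw : ∀ m : Ideal D, m.IsMaximal → Ideal.Quotient.mk m w ≠ 0) : IsUnit w := by
  by_contra hnu
  obtain ⟨m, hm, hwm⟩ := exists_max_ideal_of_mem_nonunits hnu
  exact hw m hm (Ideal.Quotient.eq_zero_iff_mem.mpr hwm)

theorem IsArtinianRing.exists_isUnit_add_isUnit {D : Type*} [CommRing D] [IsArtinianRing D]
    (h : ∀ m : Ideal D, m.IsMaximal → ∃ s : D ⧸ m, s ≠ 0 ∧ s ≠ 1)
    (g : D) : ∃ u v : D, IsUnit u ∧ IsUnit v ∧ g = u + v := by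
  let ι := {m : Ideal D | m.IsMaximal}
  have : Finite ι := (IsArtinianRing.setOfPred_isMaximal_finite D).to_subtype
  have hsel : ∀ m : ι, ∃ a : D ⧸ (m : Ideal D), a ≠ 0 ∧ a ≠ Ideal.Quotient.mk _ g := by
    intro m
    obtain ⟨s, hs0, hs1⟩ := h m m.2
    have : Nontrivial (D ⧸ (m : Ideal D)) := ⟨⟨s, 0, hs0⟩⟩
    by_cases hg : Ideal.Quotient.mk (m : Ideal D) g = 1
    · exact ⟨s, hs0, hg ▸ hs1⟩
    · exact ⟨1, one_ne_zero, Ne.symm hg⟩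
  choose a ha0 hag using hsel
  have hcoprime : Pairwise (Function.onFun IsCoprime fun m : ι => (m : Ideal D)) :=
    fun m n hmn =>
      Ideal.isCoprime_iff_sup_eq.mpr <| m.2.coprime_of_ne n.2 (Subtype.coe_ne_coe.mpr hmn)
  obtain ⟨u', hu'⟩ := Ideal.quotientInfToPiQuotient_surj hcoprime a
  obtain ⟨u, rfl⟩ := Ideal.Quotient.mk_surjective u'
  have hu : ∀ m : ι, Ideal.Quotient.mk (m : Ideal D) u = a m := fun m => by
    simpa only [Ideal.quotientInfToPiQuotient_mk'] using congrFun hu' m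
  refine ⟨u, g - u, isUnit_of_forall_quotient_ne_zero fun m hm => ?_,
    isUnit_of_forall_quotient_ne_zero fun m hm => ?_, by ring⟩
  · rw [hu ⟨m, hm⟩]; exact ha0 ⟨m, hm⟩
  · rw [map_sub, hu ⟨m, hm⟩, sub_ne_zero]; exact (hag ⟨m, hm⟩).symm

theorem IsArtinianRing.exists_isUnit_add_isUnit_of_aeval_eq_zero {F D : Type*} [Field F]
    [CommRing D] [Algebra F D] [IsArtinianRing D] {p : F[X]} (hirr : Irreducible p)
    (hp : ¬ (p.natDegree = 1 ∧ Nat.card F = 2)) {r : ℕ} {a : D} (ha : aeval a (p ^ r) = 0)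
    (g : D) : ∃ u v : D, IsUnit u ∧ IsUnit v ∧ g = u + v := by
  refine exists_isUnit_add_isUnit (fun m hm => ?_) g
  have := hm.isPrime
  refine exists_ne_zero_ne_one_of_aeval_eq_zero hirr hp (x := Ideal.Quotient.mk m a) ?_
  refine eq_zero_of_pow_eq_zero (n := r) ?_
  rw [← map_pow, ← Ideal.Quotient.mkₐ_eq_mk F, aeval_algHom_apply, ha, map_zero]

open scoped IsMulCommutative in
theorem exists_isUnit_add_isUnit_of_commute {F E : Type*} [Field F] [Ring E] [Algebra F E]
    [FiniteDimensional F E] {p : F[X]} (hirr : Irreducible p)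
    (hp : ¬ (p.natDegree = 1 ∧ Nat.card F = 2)) {r : ℕ} {a : E} (ha : aeval a (p ^ r) = 0)
    {g : E} (hga : Commute g a) :
    ∃ u v : E, IsUnit u ∧ IsUnit v ∧ Commute u a ∧ Commute v a ∧ g = u + v := by
  let D := Algebra.adjoin F ({a, g} : Set E)
  have : IsMulCommutative D := Algebra.isMulCommutative_adjoin F <| by
    rintro x (rfl | rfl) y (rfl | rfl)
    exacts [rfl, hga.eq.symm, hga.eq, rfl]
  have : IsArtinianRing D := IsArtinianRing.of_finite F D
  let a' : D := ⟨a, Algebra.subset_adjoin (by simp)⟩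
  have ha' : aeval a' (p ^ r) = 0 := Subtype.val_injective <| by simpa [a'] using ha
  obtain ⟨u, v, hu, hv, huv⟩ := IsArtinianRing.exists_isUnit_add_isUnit_of_aeval_eq_zero hirr hp
    ha' ⟨g, Algebra.subset_adjoin (by simp)⟩
  exact ⟨u, v, hu.map D.val, hv.map D.val, congrArg Subtype.val (mul_comm u a'),
    congrArg Subtype.val (mul_comm v a'), congrArg Subtype.val huv⟩

theorem char_not_hyperinv_implies_deg_one_and_card_two_general
    {F V : Type*} [Field F] [AddCommGroup V] [Module F V] [FiniteDimensional F V]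
    (A : Module.End F V) (p : Polynomial F) (r : ℕ)
    (hirr : Irreducible p)
    (hmin : minpoly F A = p ^ r)
    (Y : Submodule F V)
    (hchar : CharacteristicSubspace A Y) (hnhyp : ¬ HyperinvariantSubspace A Y) :
    p.natDegree = 1 ∧ Nat.card F = 2 := by
  by_contra hp
  refine hnhyp fun g hg x hx => ?_
  have hA : aeval A (p ^ r) = 0 := hmin ▸ minpoly.aeval F A
  obtain ⟨u, v, hu, hv, huA, hvA, rfl⟩ := exists_isUnit_add_isUnit_of_commute hirr hp hA hg
  exact Y.add_mem (hchar.2 u hu huA x hx) (hchar.2 v hv hvA x hx)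

/-- If the minimal polynomial of `A` is `p ^ r` with `p` irreducible and
separable, and there is a characteristic subspace for `A` that is not hyperinvariant, then
`deg p = 1` and `F = GF(2)`. -/
theorem char_not_hyperinv_implies_deg_one_and_card_two
    {F V : Type*} [Field F] [AddCommGroup V] [Module F V] [FiniteDimensional F V]
    (A : Module.End F V) (p : Polynomial F) (r : ℕ) (hr : 0 < r)
    (hirr : Irreducible p) (hsep : p.Separable)
    (hmin : minpoly F A = p ^ r)
    (Y : Submodule F V)
    (hchar : CharacteristicSubspace A Y) (hnhyp : ¬ HyperinvariantSubspace A Y) :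
    p.natDegree = 1 ∧ Nat.card F = 2 :=
  char_not_hyperinv_implies_deg_one_and_card_two_general A p r hirr hmin Y hchar hnhyp
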